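/- arXiv:1312.6915 — 5 statements merged into one kernel-verified Lean document; each statement's English description precedes it below -/
import Mathlib

section
/- The dihedral quandle of order n ≥ 4 is not two-point homogeneous. -/
/-- A quandle given by a family of permutations `s x` satisfying
`s x x = x` and `s x ∘ s y = s (s x y) ∘ s x`. -/
structure SQuandle (X : Type*) where
  s : X → Equiv.Perm X
  fix : ∀ x, s x x = x
  dist : ∀ x y, s x * s y = s (s x y) * s x

/-- The inner automorphism group: the subgroup of permutations generated by the `s x`. -/
def Inn {X : Type*} (s : X → Equiv.Perm X) : Subgroup (Equiv.Perm X) :=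
  Subgroup.closure (Set.range s)

/-- Two-point homogeneity with respect to the inner automorphism group. -/
def TwoPointHomogeneous {X : Type*} (s : X → Equiv.Perm X) : Prop :=
  ∀ x₁ x₂ y₁ y₂ : X, x₁ ≠ x₂ → y₁ ≠ y₂ →
    ∃ f ∈ Inn s, f x₁ = y₁ ∧ f x₂ = y₂

/-- Connectedness: the inner automorphism group acts transitively. -/
def QConnected {X : Type*} (s : X → Equiv.Perm X) : Prop :=
  ∀ x y : X, ∃ f ∈ Inn s, f x = y

/-- Cyclic type: each `s x` acts on `X \ {x}` as a single cycle of order `#X - 1`,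
i.e. `s x` is a cycle whose support is the complement of `{x}`. -/
def CyclicType {X : Type*} [Fintype X] [DecidableEq X] (s : X → Equiv.Perm X) : Prop :=
  ∀ x : X, (s x).IsCycle ∧ (s x).support = {x}ᶜ

/-- The symmetry `j ↦ 2*i - j` of the dihedral quandle on `ZMod n`. -/
def dihedralS (n : ℕ) (i : ZMod n) : Equiv.Perm (ZMod n) :=
  Function.Involutive.toPerm (fun j => 2 * i - j) (fun j => by ring)

/-! Every reflection `j ↦ 2i - j` negates all differences, so every inner automorphism of the
dihedral quandle changes each difference `x - y` at most by a sign. Mapping the pair `(0, 1)` to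
`(0, 2)` would therefore force `2 = ±1`, i.e. `1 = 0` or `3 = 0` in `ZMod n`, which fails for
`n ≥ 4`. -/

namespace Equiv.Perm

variable (G : Type*) [AddCommGroup G]

def diffUpToSign : Subgroup (Equiv.Perm G) where
  carrier := {f | ∀ x y, f x - f y = x - y ∨ f x - f y = -(x - y)}
  one_mem' _ _ := Or.inl rfl
  mul_mem' {f g} hf hg x y := by
    simp only [Set.mem_ofPred_eq, mul_apply] at *
    rcases hg x y with hxy | hxy <;> rcases hf (g x) (g y) with hgxy | hgxy <;>
      rw [hgxy, hxy] <;> simp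
  inv_mem' {f} hf x y := by
    simp only [Set.mem_ofPred_eq] at *
    rcases hf (f⁻¹ x) (f⁻¹ y) with h | h <;> simp only [coe_inv, Equiv.apply_symm_apply] at h
    · exact Or.inl h.symm
    · exact Or.inr (neg_eq_iff_eq_neg.mp h.symm)

end Equiv.Perm

open Equiv.Perm

theorem ZMod.natCast_ne_zero_of_pos_of_lt {n : ℕ} (k : ℕ) (hk : 0 < k) (hkn : k < n) :
    (k : ZMod n) ≠ 0 :=
  (ZMod.natCast_eq_zero_iff k n).not.mpr (Nat.not_dvd_of_pos_of_lt hk hkn)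

theorem dihedralS_mem_diffUpToSign (n : ℕ) (i : ZMod n) :
    dihedralS n i ∈ diffUpToSign (ZMod n) :=
  fun x y => Or.inr (show (2 * i - x) - (2 * i - y) = -(x - y) by ring)

theorem inn_dihedralS_le_diffUpToSign (n : ℕ) : Inn (dihedralS n) ≤ diffUpToSign (ZMod n) :=
  Subgroup.closure_le _ |>.mpr <| Set.range_subset_iff.mpr <| dihedralS_mem_diffUpToSign n

/-- the dihedral quandle of order `n ≥ 4` is not two-point homogeneous. -/
theorem dihedral_not_twoPointHomogeneous (n : ℕ) (hn : 4 ≤ n) :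
    ¬ TwoPointHomogeneous (dihedralS n) := by
  have hne (k : ℕ) (hk : 0 < k) (hkn : k < n) : (k : ZMod n) ≠ 0 :=
    ZMod.natCast_ne_zero_of_pos_of_lt k hk hkn
  have one_ne : (1 : ZMod n) ≠ 0 := by exact_mod_cast hne 1 one_pos (by omega)
  have two_ne : (2 : ZMod n) ≠ 0 := by exact_mod_cast hne 2 two_pos (by omega)
  intro H
  obtain ⟨f, hf, hf0, hf1⟩ := H 0 1 0 2 one_ne.symm two_ne.symm
  rcases inn_dihedralS_le_diffUpToSign n hf 1 0 with h | h <;> rw [hf0, hf1] at h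
  · exact one_ne (by linear_combination h)
  · exact hne 3 three_pos (by omega) (by push_cast; linear_combination h)
end

section
/- Every finite quandle of cyclic type (with cardinality n ≥ 3) is two-point homogeneous. -/
/-- every finite quandle of cyclic type (cardinality `≥ 3`) is
two-point homogeneous. -/
theorem cyclicType_twoPointHomogeneous {X : Type*} [Fintype X] [DecidableEq X]
    (Q : SQuandle X) (hcard : 3 ≤ Fintype.card X)
    (hc : CyclicType Q.s) :
    TwoPointHomogeneous Q.s := by
  -- key: for z ≠ a, z ≠ b, some power of `s z` maps a to b, lies in Inn, and fixes z
  have key : ∀ z a b : X, z ≠ a → z ≠ b → ∃ f ∈ Inn Q.s, f a = b ∧ f z = z := by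
    intro z a b hza hzb
    obtain ⟨hcyc, hsupp⟩ := hc z
    have ha : Q.s z a ≠ a := by
      have : a ∈ (Q.s z).support := by rw [hsupp]; simp [Ne.symm hza]
      exact Equiv.Perm.mem_support.mp this
    have hb : Q.s z b ≠ b := by
      have : b ∈ (Q.s z).support := by rw [hsupp]; simp [Ne.symm hzb]
      exact Equiv.Perm.mem_support.mp this
    obtain ⟨n, hn⟩ := hcyc.exists_pow_eq ha hb
    have hfix : ∀ m : ℕ, ((Q.s z) ^ m) z = z := by
      intro m
      induction m with
      | zero => simp
      | succ k ih => rw [pow_succ, Equiv.Perm.mul_apply, Q.fix, ih]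
    exact ⟨(Q.s z) ^ n,
      Subgroup.pow_mem _ (Subgroup.subset_closure (Set.mem_range_self z)) n, hn, hfix n⟩
  intro x₁ x₂ y₁ y₂ hx hy
  -- step 1: map x₁ to y₁
  obtain ⟨f, hf, hf1⟩ : ∃ f ∈ Inn Q.s, f x₁ = y₁ := by
    by_cases h : x₁ = y₁
    · exact ⟨1, Subgroup.one_mem _, h⟩
    · have : ∃ z : X, z ≠ x₁ ∧ z ≠ y₁ := by
        by_contra hcon
        push_neg at hcon
        have hsub : (Finset.univ : Finset X) ⊆ {x₁, y₁} := by
          intro z _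
          rcases eq_or_ne z x₁ with rfl | hz1
          · simp
          · simp [hcon z hz1]
        have h1 := Finset.card_le_card hsub
        have h2 : ({x₁, y₁} : Finset X).card ≤ 2 :=
          (Finset.card_insert_le _ _).trans (by simp)
        simp only [Finset.card_univ] at h1
        omega
      obtain ⟨z, hz1, hz2⟩ := this
      obtain ⟨g, hg, hg1, -⟩ := key z x₁ y₁ hz1 hz2
      exact ⟨g, hg, hg1⟩
  -- step 2: map f x₂ to y₂ fixing y₁, using powers of s y₁
  have hfx2 : y₁ ≠ f x₂ := by
    rw [← hf1]; exact fun h => hx (f.injective h)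
  obtain ⟨g, hg, hg2, hg1⟩ := key y₁ (f x₂) y₂ hfx2 hy
  refine ⟨g * f, Subgroup.mul_mem _ hg hf, ?_, ?_⟩
  · simp [Equiv.Perm.mul_apply, hf1, hg1]
  · simp [Equiv.Perm.mul_apply, hg2]
end

section
/- Let X = (X, s) be a quandle with #X = n ≥ 3. The following are equivalent: (1) X is of cyclic type; (2) X is connected and there exists x ∈ X such that s_x acts on X \ {x} as a cyclic permutation of order n − 1; (3) X is connected and there exists x ∈ X such that the cyclic group ⟨s_x⟩ acts transitively on X \ {x}. -/
lemma conj_eq {X : Type*} (Q : SQuandle X) {f : Equiv.Perm X} (hf : f ∈ Inn Q.s) :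
    ∀ x, f * Q.s x * f⁻¹ = Q.s (f x) := by
  induction hf using Subgroup.closure_induction with
  | mem g hg =>
    obtain ⟨y, rfl⟩ := hg
    intro x
    rw [Q.dist y x, mul_inv_cancel_right]
  | one => intro x; simp
  | mul g h _ _ hg hh =>
    intro x
    have : g * h * Q.s x * (g * h)⁻¹ = g * (h * Q.s x * h⁻¹) * g⁻¹ := by group
    rw [this, hh x, hg (h x)]
    simp
  | inv g _ hg =>
    intro x
    have := hg (g⁻¹ x)
    have h2 : Q.s (g (g⁻¹ x)) = Q.s x := by simp
    rw [h2] at this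
    rw [← this]; group

lemma exists_third {X : Type*} [Fintype X] [DecidableEq X] (hcard : 3 ≤ Fintype.card X)
    (y z : X) : ∃ x : X, x ≠ y ∧ x ≠ z := by
  by_contra h
  push_neg at h
  have hsub : (Finset.univ : Finset X) ⊆ {y, z} := by
    intro x _
    simp only [Finset.mem_insert, Finset.mem_singleton]
    rcases eq_or_ne x y with h1 | h1
    · exact Or.inl h1
    · exact Or.inr (h x h1)
  have := Finset.card_le_card hsub
  have h2 : ({y, z} : Finset X).card ≤ 2 := Finset.card_le_two
  rw [Finset.card_univ] at this
  omega

/-- for a quandle with `#X = n ≥ 3`, TFAE: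
(1) cyclic type; (2) connected and some `s x` acts on `X \ {x}` as an `(n-1)`-cycle;
(3) connected and some `⟨s x⟩` acts transitively on `X \ {x}`. -/
theorem cyclicType_iff {X : Type*} [Fintype X] [DecidableEq X]
    (Q : SQuandle X) (hcard : 3 ≤ Fintype.card X) :
    (CyclicType Q.s ↔
      (QConnected Q.s ∧ ∃ x : X, (Q.s x).IsCycle ∧ (Q.s x).support = {x}ᶜ)) ∧
    ((QConnected Q.s ∧ ∃ x : X, (Q.s x).IsCycle ∧ (Q.s x).support = {x}ᶜ) ↔
      (QConnected Q.s ∧ ∃ x : X, ∀ y z : X, y ≠ x → z ≠ x →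
        ∃ k : ℤ, ((Q.s x) ^ k) y = z)) := by
  have hmemsupp : ∀ (x y : X), (Q.s x).support = {x}ᶜ → y ≠ x → Q.s x y ≠ y := by
    intro x y hs hy
    have : y ∈ (Q.s x).support := by rw [hs]; simpa using hy
    exact Equiv.Perm.mem_support.mp this
  constructor
  · constructor
    · intro hct
      refine ⟨?_, ?_⟩
      · -- connected
        intro y z
        rcases eq_or_ne y z with rfl | hyz
        · exact ⟨1, one_mem _, rfl⟩
        · obtain ⟨x, hxy, hxz⟩ := exists_third hcard y z
          obtain ⟨hc, hs⟩ := hct x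
          obtain ⟨i, hi⟩ := hc.exists_pow_eq (hmemsupp x y hs hxy.symm)
            (hmemsupp x z hs hxz.symm)
          refine ⟨(Q.s x) ^ i, ?_, hi⟩
          exact pow_mem (Subgroup.subset_closure (Set.mem_range_self x)) i
      · have : Nonempty X := Fintype.card_pos_iff.mp (by omega)
        obtain ⟨x⟩ := this
        exact ⟨x, hct x⟩
    · rintro ⟨hconn, x₀, hc, hs⟩ x
      obtain ⟨f, hf, hfx⟩ := hconn x₀ x
      have hconj := conj_eq Q hf x₀
      rw [hfx] at hconj
      constructor
      · rw [← hconj]; exact hc.conj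
      · rw [← hconj, Equiv.Perm.support_conj, hs]
        ext y
        simp only [Finset.mem_map_equiv, Finset.mem_compl, Finset.mem_singleton,
          Equiv.symm_apply_eq, hfx]
  · constructor
    · rintro ⟨hconn, x, hc, hs⟩
      refine ⟨hconn, x, fun y z hy hz => ?_⟩
      exact hc.exists_zpow_eq (hmemsupp x y hs hy) (hmemsupp x z hs hz)
    · rintro ⟨hconn, x, htr⟩
      refine ⟨hconn, x, ?_⟩
      have hsupp : (Q.s x).support = {x}ᶜ := by
        ext y
        simp only [Equiv.Perm.mem_support, Finset.mem_compl, Finset.mem_singleton]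
        constructor
        · intro hy
          rintro rfl
          exact hy (Q.fix y)
        · intro hy hfix
          obtain ⟨z, hzx, hzy⟩ := exists_third hcard x y
          obtain ⟨k, hk⟩ := htr y z hy hzx
          have : ((Q.s x) ^ k) y = y :=
            Equiv.Perm.zpow_apply_eq_self_of_apply_eq_self hfix k
          rw [this] at hk
          exact hzy hk.symm
      obtain ⟨y, hyx, -⟩ := exists_third hcard x x
      have hy : Q.s x y ≠ y := hmemsupp x y hsupp hyx
      refine ⟨⟨y, hy, fun z hz => ?_⟩, hsupp⟩
      have hzx : z ≠ x := by rintro rfl; exact hz (Q.fix z)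
      exact htr y z hyx hzx
end

section
/- Let p be a prime and 2 ≤ a ≤ p − 1. The inner automorphism group of the linear Alexander quandle X = Λ_p/(t − a) equals {(s_x)^k | x ∈ ℤ/pℤ, k ∈ ℤ} ∪ {φ_m | m ∈ ℤ/pℤ}, where φ_m(x) = x + m. -/
/-- The symmetry `y ↦ a*y + (1-a)*x` of the linear Alexander quandle
`Λ_p/(t-a)` on `ZMod p` (`p` prime, `a ≠ 0`). -/
def alexS (p : ℕ) [Fact p.Prime] (a : ZMod p) (ha : a ≠ 0) (x : ZMod p) :
    Equiv.Perm (ZMod p) where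
  toFun y := a * y + (1 - a) * x
  invFun y := a⁻¹ * (y - (1 - a) * x)
  left_inv y := by field_simp <;> ring
  right_inv y := by field_simp <;> ring

/-!
Every generator `s_x : y ↦ a y + (1 - a) x` is affine with linear part `a`, so every inner
automorphism has the form `z ↦ a ^ k z + c`. If `a ^ k ≠ 1` such a map has the unique fixed point
`x = c / (1 - a ^ k)` and is then `s_x ^ k`; if `a ^ k = 1` it is a translation. Conversely the
translation by `m` is `s_{m / (1 - a)} ∘ s_0⁻¹`.
-/

open Equiv

section PowAffine

variable {K : Type*} [Field K]

def powAffineSubgroup (a : K) (ha : a ≠ 0) : Subgroup (Perm K) where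
  carrier := {f | ∃ (k : ℤ) (c : K), ∀ z, f z = a ^ k * z + c}
  one_mem' := ⟨0, 0, fun z => by simp⟩
  mul_mem' := by
    rintro f g ⟨k, c, hf⟩ ⟨j, d, hg⟩
    exact ⟨k + j, a ^ k * d + c, fun z => by
      rw [Perm.mul_apply, hg, hf, zpow_add₀ ha]; ring⟩
  inv_mem' := by
    rintro f ⟨k, c, hf⟩
    refine ⟨-k, -(a ^ (-k) * c), fun z => ?_⟩
    rw [Perm.inv_eq_iff_eq, hf, zpow_neg]
    field_simp [zpow_ne_zero k ha]
    ring

end PowAffine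

section Alexander

variable {p : ℕ} [Fact p.Prime] {a : ZMod p} (ha : a ≠ 0)

@[simp]
lemma alexS_apply (x y : ZMod p) : alexS p a ha x y = a * y + (1 - a) * x := rfl

lemma alexS_inv_apply (x y : ZMod p) :
    (alexS p a ha x)⁻¹ y = a⁻¹ * y + (1 - a⁻¹) * x := by
  rw [Perm.inv_eq_iff_eq, alexS_apply]
  field_simp
  ring

lemma alexS_zpow_apply (x : ZMod p) (k : ℤ) (y : ZMod p) :
    (alexS p a ha x ^ k) y = a ^ k * y + (1 - a ^ k) * x := by
  induction k using Int.induction_on generalizing y with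
  | zero => simp
  | succ n ih =>
    rw [zpow_add_one, Perm.mul_apply, alexS_apply, ih, zpow_add_one₀ ha]
    ring
  | pred n ih =>
    rw [zpow_sub_one, Perm.mul_apply, alexS_inv_apply, ih, zpow_sub_one₀ ha]
    field_simp
    ring

lemma inn_alexS_le_powAffineSubgroup : Inn (alexS p a ha) ≤ powAffineSubgroup a ha :=
  Subgroup.closure_le _ |>.mpr <| by
    rintro _ ⟨x, rfl⟩
    exact ⟨1, (1 - a) * x, fun z => by simp⟩

lemma eq_alexS_zpow_or_addLeft_of_mem_powAffineSubgroup {f : Perm (ZMod p)}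
    (hf : f ∈ powAffineSubgroup a ha) :
    (∃ (x : ZMod p) (k : ℤ), f = alexS p a ha x ^ k) ∨ ∃ m : ZMod p, f = Equiv.addLeft m := by
  obtain ⟨k, c, hfk⟩ := hf
  by_cases hak : a ^ k = 1
  · exact Or.inr ⟨c, Perm.ext fun z => by simp [hfk z, hak, add_comm]⟩
  · have h1k : (1 : ZMod p) - a ^ k ≠ 0 := sub_ne_zero.mpr (Ne.symm hak)
    refine Or.inl ⟨(1 - a ^ k)⁻¹ * c, k, Perm.ext fun z => ?_⟩
    rw [hfk z, alexS_zpow_apply]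
    field_simp

lemma alexS_mem_inn (x : ZMod p) : alexS p a ha x ∈ Inn (alexS p a ha) :=
  Subgroup.subset_closure (Set.mem_range_self x)

lemma addLeft_eq_alexS_mul_alexS_zero_inv (ha1 : a ≠ 1) (m : ZMod p) :
    Equiv.addLeft m = alexS p a ha ((1 - a)⁻¹ * m) * (alexS p a ha 0)⁻¹ := by
  have h1a : (1 : ZMod p) - a ≠ 0 := sub_ne_zero.mpr (Ne.symm ha1)
  ext z
  rw [Perm.mul_apply, alexS_inv_apply, alexS_apply, Equiv.coe_addLeft]
  field_simp
  ring

lemma addLeft_mem_inn_alexS (ha1 : a ≠ 1) (m : ZMod p) :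
    Equiv.addLeft m ∈ Inn (alexS p a ha) := by
  rw [addLeft_eq_alexS_mul_alexS_zero_inv ha ha1]
  exact mul_mem (alexS_mem_inn ha _) (inv_mem (alexS_mem_inn ha 0))

end Alexander

/-- `Inn(Λ_p/(t-a)) = {(s x)^k} ∪ {translations}`. -/
theorem alex_inn_eq (p : ℕ) [Fact p.Prime] (a : ZMod p)
    (ha : a ≠ 0) (ha1 : a ≠ 1) :
    (Inn (alexS p a ha) : Set (Equiv.Perm (ZMod p))) =
      {f | ∃ (x : ZMod p) (k : ℤ), f = (alexS p a ha x) ^ k} ∪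
      {f | ∃ m : ZMod p, f = Equiv.addLeft m} := by
  ext f
  constructor
  · intro hf
    exact eq_alexS_zpow_or_addLeft_of_mem_powAffineSubgroup ha
      (inn_alexS_le_powAffineSubgroup ha hf)
  · rintro (⟨x, k, rfl⟩ | ⟨m, rfl⟩)
    · exact zpow_mem (alexS_mem_inn ha x) k
    · exact addLeft_mem_inn_alexS ha ha1 m
end

section
/- Let X be a finite two-point homogeneous quandle with #X = p + 1, where p is a prime. Then X is of cyclic type; specifically, for each x ∈ X, the cyclic group ⟨s_x⟩ acts transitively on X \ {x}. -/
/-- a two-point homogeneous quandle with `#X = p + 1` (`p` prime)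
is of cyclic type; specifically each `⟨s x⟩` acts transitively on `X \ {x}`. -/
theorem twoPointHomogeneous_card_prime_succ_cyclicType {X : Type*}
    [Fintype X] [DecidableEq X] (Q : SQuandle X) (p : ℕ) (hp : p.Prime)
    (hcard : Fintype.card X = p + 1)
    (h : TwoPointHomogeneous Q.s) :
    CyclicType Q.s ∧
      ∀ x y z : X, y ≠ x → z ≠ x → ∃ k : ℤ, ((Q.s x) ^ k) y = z := by
  classical
  -- conjugation formula on Inn
  have conj : ∀ f ∈ Inn Q.s, ∀ x : X, f * Q.s x = Q.s (f x) * f := by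
    intro f hf
    induction hf using Subgroup.closure_induction with
    | mem g hg => obtain ⟨y, rfl⟩ := hg; exact fun x => Q.dist y x
    | one => simp
    | mul g g' _ _ ihg ihg' =>
        intro x
        calc (g * g') * Q.s x = g * (Q.s (g' x) * g') := by rw [mul_assoc, ihg' x]
          _ = (g * Q.s (g' x)) * g' := by rw [mul_assoc]
          _ = (Q.s (g (g' x)) * g) * g' := by rw [ihg (g' x)]
          _ = Q.s ((g * g') x) * (g * g') := by simp [mul_assoc]
    | inv g _ ihg =>
        intro x
        have h1 := ihg (g⁻¹ x)
        have h2 : g * Q.s (g⁻¹ x) = Q.s x * g := by rw [h1]; simp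
        calc g⁻¹ * Q.s x = g⁻¹ * (Q.s x * g) * g⁻¹ := by group
          _ = g⁻¹ * (g * Q.s (g⁻¹ x)) * g⁻¹ := by rw [h2]
          _ = Q.s (g⁻¹ x) * g⁻¹ := by group
  have hconn : QConnected Q.s := by
    intro x y
    by_cases hxy : x = y
    · exact ⟨1, one_mem _, by simp [hxy]⟩
    · obtain ⟨f, hf, h1, _⟩ := h x y y x hxy (Ne.symm hxy)
      exact ⟨f, hf, h1⟩
  -- no s x is trivial
  have sx_ne_one : ∀ x : X, Q.s x ≠ 1 := by
    intro x hx1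
    have hall : ∀ y, Q.s y = 1 := by
      intro y
      obtain ⟨f, hf, hfx⟩ := hconn x y
      have hc := conj f hf x
      rw [hx1, hfx, mul_one] at hc
      have h3 : (1 : Equiv.Perm X) * f = Q.s y * f := by rw [one_mul, ← hc]
      exact (mul_right_cancel h3).symm
    have hinn : ∀ f ∈ Inn Q.s, f = 1 := by
      intro f hf
      induction hf using Subgroup.closure_induction with
      | mem g hg => obtain ⟨y, rfl⟩ := hg; exact hall y
      | one => rfl
      | mul g g' _ _ ihg ihg' => rw [ihg, ihg', one_mul]
      | inv g _ ihg => rw [ihg, inv_one]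
    have h2 : 1 < Fintype.card X := by
      rw [hcard]; have := hp.two_le; omega
    obtain ⟨a, b, hab⟩ := Fintype.exists_pair_of_one_lt_card h2
    obtain ⟨f, hf, hfa, _⟩ := h a b b a hab hab.symm
    rw [hinn f hf] at hfa
    simp at hfa
    exact hab hfa
  -- key rigidity: a power of s x fixing some y ≠ x is the identity
  have key : ∀ (x y : X), y ≠ x → ∀ k : ℕ, ((Q.s x) ^ k) y = y → (Q.s x) ^ k = 1 := by
    intro x y hyx k hk
    ext z
    by_cases hzx : z = x
    · subst hzx
      rw [Equiv.Perm.pow_apply_eq_self_of_apply_eq_self (Q.fix z)]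
      simp
    · obtain ⟨f, hf, hfx, hfy⟩ := h x y x z (Ne.symm hyx) (Ne.symm hzx)
      have hcomm : Commute f ((Q.s x) ^ k) := by
        have : f * Q.s x = Q.s x * f := by rw [conj f hf x, hfx]
        exact (Commute.pow_right this k)
      calc ((Q.s x) ^ k) z = ((Q.s x) ^ k) (f y) := by rw [hfy]
        _ = (((Q.s x) ^ k) * f) y := rfl
        _ = (f * ((Q.s x) ^ k)) y := by rw [hcomm.eq]
        _ = f (((Q.s x) ^ k) y) := rfl
        _ = (1 : Equiv.Perm X) z := by rw [hk, hfy]; simp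
  -- support of s x
  have hsupp : ∀ x : X, (Q.s x).support = {x}ᶜ := by
    intro x
    ext y
    rw [Equiv.Perm.mem_support, Finset.mem_compl, Finset.mem_singleton]
    constructor
    · intro hy
      rintro rfl
      exact hy (Q.fix y)
    · intro hyx hfix
      exact sx_ne_one x (by simpa using key x y hyx 1 (by simpa using hfix))
  have hsuppcard : ∀ x : X, (Q.s x).support.card = p := by
    intro x
    rw [hsupp x, Finset.card_compl, Finset.card_singleton, hcard]
    omega
  -- each s x is a cycle
  have hcyc : ∀ x : X, (Q.s x).IsCycle := by
    intro x
    set m := orderOf (Q.s x) with hm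
    have hent : ∀ n ∈ (Q.s x).cycleType, n = m := by
      intro n hn
      rw [Equiv.Perm.cycleType_def, Multiset.mem_map] at hn
      obtain ⟨c, hc, rfl⟩ := hn
      have hc' : c ∈ (Q.s x).cycleFactorsFinset := hc
      have hcycle : c.IsCycle := (Equiv.Perm.mem_cycleFactorsFinset_iff.mp hc').1
      obtain ⟨y, hy, -⟩ := id hcycle
      have hysup : y ∈ c.support := Equiv.Perm.mem_support.mpr hy
      have hcs : c = (Q.s x).cycleOf y := Equiv.Perm.cycle_is_cycleOf hysup hc'
      have hyx : y ≠ x := by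
        have hne : Q.s x y ≠ y := by
          rw [← (Equiv.Perm.mem_cycleFactorsFinset_iff.mp hc').2 y hysup]
          exact hy
        intro hyx
        exact hne (by rw [hyx]; exact Q.fix x)
      have hpow : ∀ j : ℕ, (c ^ j) y = ((Q.s x) ^ j) y := by
        intro j
        rw [hcs]
        exact Equiv.Perm.cycleOf_pow_apply_self (Q.s x) y j
      have h1 : c ^ m = 1 := by
        refine hcycle.pow_eq_one_iff.mpr ⟨y, hy, ?_⟩
        rw [hpow m, pow_orderOf_eq_one]
        simp
      have h2 : m ∣ orderOf c := by
        apply orderOf_dvd_of_pow_eq_one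
        apply key x y hyx
        rw [← hpow (orderOf c), pow_orderOf_eq_one]
        simp
      have h3 : orderOf c = m :=
        Nat.dvd_antisymm (orderOf_dvd_of_pow_eq_one h1) h2
      simpa [← h3] using hcycle.orderOf.symm
    have hrep : (Q.s x).cycleType =
        Multiset.replicate (Multiset.card (Q.s x).cycleType) m :=
      Multiset.eq_replicate_card.mpr hent
    have hsum : (Q.s x).cycleType.sum = p := by
      rw [Equiv.Perm.sum_cycleType, hsuppcard x]
    have hprod : Multiset.card (Q.s x).cycleType * m = p := by
      rw [← hsum]
      conv_rhs => rw [hrep]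
      rw [Multiset.sum_replicate, smul_eq_mul]
    have hm1 : m ≠ 1 := by
      intro hm1
      exact sx_ne_one x (orderOf_eq_one_iff.mp hm1)
    have hmp : m = p := by
      have hdvd : m ∣ p := ⟨_, by rw [← hprod, mul_comm]⟩
      exact (hp.eq_one_or_self_of_dvd m hdvd).resolve_left hm1
    have hcard1 : Multiset.card (Q.s x).cycleType = 1 := by
      rw [hmp] at hprod
      have hp0 : p ≠ 0 := hp.ne_zero
      exact Nat.eq_of_mul_eq_mul_right (Nat.pos_of_ne_zero hp0) (by omega)
    exact Equiv.Perm.card_cycleType_eq_one.mp hcard1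
  refine ⟨fun x => ⟨hcyc x, hsupp x⟩, ?_⟩
  intro x y z hyx hzx
  have hy : Q.s x y ≠ y := by
    have : y ∈ (Q.s x).support := by
      rw [hsupp x, Finset.mem_compl, Finset.mem_singleton]; exact hyx
    exact Equiv.Perm.mem_support.mp this
  have hz : Q.s x z ≠ z := by
    have : z ∈ (Q.s x).support := by
      rw [hsupp x, Finset.mem_compl, Finset.mem_singleton]; exact hzx
    exact Equiv.Perm.mem_support.mp this
  obtain ⟨i, hi⟩ := (hcyc x).sameCycle hy hz
  exact ⟨i, hi⟩
end
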